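/- arXiv:1607.07368 — 2 statements merged into one kernel-verified Lean document; each statement's English description precedes it below -/
import Mathlib

section
/- With ρ_eff(c_δ) = (C/(T−2N))·c_δ(a − c_δ)/(b − c_δ), where C = MN(T−N), a = ρT/(MN(T−N)), b = (N + ρT)/(MN(T−2N)), and T > 2N, the maximizing data power is c_δ* = b − √(b² − ab), and the maximal effective SNR is ρ_eff* = (MN(T−N)/(T−2N))·(2b − a − 2√(b² − ab)). -/
set_option maxHeartbeats 1000000


/-- With `ρ_eff(c_δ) = (MN(T−N)/(T−2N))·c_δ(a−c_δ)/(b−c_δ)`,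
`a = ρT/(MN(T−N))`, `b = (N+ρT)/(MN(T−2N))`, the maximizing data power over
`c_δ ∈ [0,a]` is `c_δ* = b − √(b²−ab)` and the maximum is
`(MN(T−N)/(T−2N))(2b − a − 2√(b²−ab))`. -/
theorem stmt_5 (M N T : ℕ) (hM : 0 < M) (hN : 0 < N) (hT : 2 * N < T)
    (ρ : ℝ) (hρ : 0 < ρ) :
    let a : ℝ := ρ * T / ((M : ℝ) * N * ((T : ℝ) - N))
    let b : ℝ := ((N : ℝ) + ρ * T) / ((M : ℝ) * N * ((T : ℝ) - 2 * N))
    let ρeff : ℝ → ℝ := fun cδ =>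
      ((M : ℝ) * N * ((T : ℝ) - N) / ((T : ℝ) - 2 * N)) * (cδ * (a - cδ) / (b - cδ))
    (b - Real.sqrt (b ^ 2 - a * b)) ∈ Set.Icc (0 : ℝ) a ∧
    (∀ cδ ∈ Set.Icc (0 : ℝ) a, ρeff cδ ≤ ρeff (b - Real.sqrt (b ^ 2 - a * b))) ∧
    ρeff (b - Real.sqrt (b ^ 2 - a * b)) =
      ((M : ℝ) * N * ((T : ℝ) - N) / ((T : ℝ) - 2 * N)) *
        (2 * b - a - 2 * Real.sqrt (b ^ 2 - a * b)) := by
  intro a b ρeff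
  have hNR : (0:ℝ) < N := by exact_mod_cast hN
  have hMR : (0:ℝ) < M := by exact_mod_cast hM
  have hT2 : (0:ℝ) < (T:ℝ) - 2 * N := by
    have : (2*N:ℝ) < T := by exact_mod_cast hT
    linarith
  have hTN : (0:ℝ) < (T:ℝ) - N := by nlinarith
  have hTpos : (0:ℝ) < T := by nlinarith
  have hMN : (0:ℝ) < (M:ℝ) * N := by positivity
  have ha : 0 < a := by
    have : 0 < ρ * T := by positivity
    exact div_pos this (by positivity)
  have hab : a < b := by
    rw [show a = ρ * T / ((M : ℝ) * N * ((T : ℝ) - N)) from rfl,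
      show b = ((N : ℝ) + ρ * T) / ((M : ℝ) * N * ((T : ℝ) - 2 * N)) from rfl,
      div_lt_div_iff₀ (by positivity) (by positivity)]
    nlinarith [mul_pos hMN (mul_pos hNR hTN), mul_pos hMN (mul_pos hNR (mul_pos hρ hTpos))]
  clear_value a b
  set s := Real.sqrt (b ^ 2 - a * b) with hs
  have hnn : 0 ≤ b ^ 2 - a * b := by nlinarith
  have hs2 : s ^ 2 = b ^ 2 - a * b := Real.sq_sqrt hnn
  have hs0 : 0 ≤ s := Real.sqrt_nonneg _
  have hspos : 0 < s := by
    rcases hs0.lt_or_eq with h | h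
    · exact h
    · exfalso; nlinarith [hs2]
  have hsb : s < b := by nlinarith [hs2]
  have hba : b - a ≤ s := by nlinarith [hs2]
  have hmem : (b - s) ∈ Set.Icc (0:ℝ) a := ⟨by linarith, by linarith⟩
  have hK : 0 ≤ (M : ℝ) * N * ((T : ℝ) - N) / ((T : ℝ) - 2 * N) := by positivity
  have hval : ρeff (b - s) =
      ((M : ℝ) * N * ((T : ℝ) - N) / ((T : ℝ) - 2 * N)) * (2 * b - a - 2 * s) := by
    show ((M : ℝ) * N * ((T : ℝ) - N) / ((T : ℝ) - 2 * N)) *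
        ((b - s) * (a - (b - s)) / (b - (b - s))) = _
    congr 1
    rw [show b - (b - s) = s by ring, div_eq_iff hspos.ne']
    nlinarith [hs2]
  refine ⟨hmem, fun c hc => ?_, hval⟩
  rw [hval]
  apply mul_le_mul_of_nonneg_left _ hK
  obtain ⟨hc0, hca⟩ := hc
  have hbc : 0 < b - c := by linarith
  rw [div_le_iff₀ hbc]
  nlinarith [sq_nonneg (c - (b - s)), hs2]
end

section
/- With a = ρT/(MN(T−N)) and b = (N+ρT)/(MN(T−2N)), T > 2N, as ρ → 0 the optimal effective SNR ρ_eff* = (MN(T−N)/(T−2N))(2b − a − 2√(b²−ab)) satisfies ρ_eff* = ρ²T²/(4N(T−N)) + o(ρ²). -/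
open Filter Asymptotics Topology

/-!
Writing `2b - a - 2√(b² - ab) = (√b - √(b - a))²` and rationalising, the bracket equals
`a² / (√b + √(b - a))²`. Since `a` is linear in `ρ` and `b → b₀ > 0`, the denominator tends
to `4 b₀`, so the effective SNR is `ρ²` times a function continuous at `0`; its value there
is the claimed coefficient.
-/

theorem two_mul_sub_sub_two_sqrt_eq {a b : ℝ} (hb : 0 < b) (hab : a ≤ b) :
    2 * b - a - 2 * Real.sqrt (b ^ 2 - a * b) = a ^ 2 / (Real.sqrt b + Real.sqrt (b - a)) ^ 2 := by
  have hsum : Real.sqrt b + Real.sqrt (b - a) ≠ 0 :=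
    (add_pos_of_pos_of_nonneg (Real.sqrt_pos.mpr hb) (Real.sqrt_nonneg _)).ne'
  have hprod : Real.sqrt (b ^ 2 - a * b) = Real.sqrt b * Real.sqrt (b - a) := by
    rw [← Real.sqrt_mul hb.le]; ring_nf
  rw [hprod, eq_div_iff (pow_ne_zero 2 hsum)]
  obtain ⟨s, hs⟩ : ∃ s, Real.sqrt b = s := ⟨_, rfl⟩
  obtain ⟨t, ht⟩ : ∃ t, Real.sqrt (b - a) = t := ⟨_, rfl⟩
  have hb_eq : b = s ^ 2 := by rw [← hs, Real.sq_sqrt hb.le]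
  have ha_eq : a = s ^ 2 - t ^ 2 := by rw [← ht, Real.sq_sqrt (sub_nonneg.mpr hab)]; linarith
  rw [hs, ht, ha_eq, hb_eq]
  ring

theorem isLittleO_two_mul_sub_sub_two_sqrt (α β γ : ℝ) (hβ : 0 < β) :
    (fun ρ : ℝ => 2 * (β + γ * ρ) - α * ρ - 2 * Real.sqrt ((β + γ * ρ) ^ 2 - α * ρ * (β + γ * ρ))
        - α ^ 2 / (4 * β) * ρ ^ 2) =o[𝓝 0] (fun ρ => ρ ^ 2) := by
  set D : ℝ → ℝ := fun ρ => (Real.sqrt (β + γ * ρ) + Real.sqrt (β + γ * ρ - α * ρ)) ^ 2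
  have hD : Tendsto D (𝓝 0) (𝓝 (4 * β)) := by
    have hD0 : D 0 = 4 * β := by
      simp only [D, mul_zero, add_zero, sub_zero]
      rw [← two_mul, mul_pow, Real.sq_sqrt hβ.le]; ring
    simpa only [hD0] using (by fun_prop : Continuous D).tendsto 0
  have hcoeff : Tendsto (fun ρ => α ^ 2 / D ρ - α ^ 2 / (4 * β)) (𝓝 0) (𝓝 0) := by
    have := ((tendsto_const_nhds (x := α ^ 2)).div hD (by positivity)).sub_const (α ^ 2 / (4 * β))
    rwa [sub_self] at this
  have hb : ∀ᶠ ρ in 𝓝 (0 : ℝ), 0 < β + γ * ρ :=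
    (by fun_prop : Continuous fun ρ : ℝ => β + γ * ρ).tendsto' 0 β (by simp)
      |>.eventually_const_lt hβ
  have hab : ∀ᶠ ρ in 𝓝 (0 : ℝ), 0 < β + γ * ρ - α * ρ :=
    (by fun_prop : Continuous fun ρ : ℝ => β + γ * ρ - α * ρ).tendsto' 0 β (by simp)
      |>.eventually_const_lt hβ
  refine (((isLittleO_one_iff ℝ).mpr hcoeff).mul_isBigO (isBigO_refl (fun ρ => ρ ^ 2) _)).congr'
    ?_ (Eventually.of_forall fun ρ => one_mul _)
  filter_upwards [hb, hab] with ρ hbρ habρ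
  rw [two_mul_sub_sub_two_sqrt_eq hbρ (sub_pos.mp habρ).le]
  ring

/-- As `ρ → 0⁺`, the optimal effective SNR
`ρ_eff* = (MN(T−N)/(T−2N))(2b − a − 2√(b²−ab))` satisfies
`ρ_eff* = ρ²T²/(4N(T−N)) + o(ρ²)`. -/
theorem stmt_6 (M N T : ℕ) (hM : 0 < M) (hN : 0 < N) (hT : 2 * N < T) :
    (fun ρ : ℝ =>
      (let a : ℝ := ρ * T / ((M : ℝ) * N * ((T : ℝ) - N))
       let b : ℝ := ((N : ℝ) + ρ * T) / ((M : ℝ) * N * ((T : ℝ) - 2 * N))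
       ((M : ℝ) * N * ((T : ℝ) - N) / ((T : ℝ) - 2 * N)) *
         (2 * b - a - 2 * Real.sqrt (b ^ 2 - a * b)))
      - ρ ^ 2 * (T : ℝ) ^ 2 / (4 * (N : ℝ) * ((T : ℝ) - N)))
      =o[nhdsWithin 0 (Set.Ioi 0)] (fun ρ : ℝ => ρ ^ 2) := by
  have hM' : (0 : ℝ) < M := by exact_mod_cast hM
  have hN' : (0 : ℝ) < N := by exact_mod_cast hN
  have hT2N : (0 : ℝ) < T - 2 * N := by
    rw [sub_pos]; exact_mod_cast hT
  have hTN : (0 : ℝ) < T - N := by linarith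
  set c₁ : ℝ := M * N * (T - N)
  set c₂ : ℝ := M * N * (T - 2 * N)
  have hc₁ : c₁ ≠ 0 := by positivity
  have hc₂ : 0 < c₂ := by positivity
  have key := (isLittleO_two_mul_sub_sub_two_sqrt (T / c₁) (N / c₂) (T / c₂)
    (by positivity)).const_mul_left (c₁ / (T - 2 * N))
  refine (key.mono nhdsWithin_le_nhds).congr_left fun ρ => ?_
  have ha : T / c₁ * ρ = ρ * T / c₁ := by ring
  have hb : N / c₂ + T / c₂ * ρ = (N + ρ * T) / c₂ := by ring
  simp only [ha, hb]
  field_simp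
  ring
end
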